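/- Let ℓ₁ = s₂ + s₃, ℓ₂ = s₁ + s₃, ℓ₃ = s₁ + s₂ in ℚ[s₁,s₂,s₃], and let J be the ideal generated only by the three polynomials (ℓ₁+1)(ℓ₂+1), (ℓ₁+1)(ℓ₃+1), (ℓ₂+1)(ℓ₃+1). Then there is no nonzero polynomial b ∈ ℚ[t] with b(s₁+s₂+s₃) ∈ J. -/
import Mathlib


open MvPolynomial

/-- `ℓ₁ = s₂+s₃`, `ℓ₂ = s₁+s₃`, `ℓ₃ = s₁+s₂` in `ℚ[s₁,s₂,s₃]`. -/
noncomputable def ell (k : Fin 3) : MvPolynomial (Fin 3) ℚ :=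
  ∑ j ∈ Finset.univ.erase k, X j

/-- The ideal generated only by the products `(ℓᵢ+1)(ℓⱼ+1)` for `i ≠ j`. -/
noncomputable def J₁ : Ideal (MvPolynomial (Fin 3) ℚ) :=
  Ideal.span {p | ∃ i j : Fin 3, i ≠ j ∧ p = (ell i + 1) * (ell j + 1)}

lemma eval_ell_line (t : ℚ) (k : Fin 3) :
    eval (![t, t, -1 - t]) (ell k + 1) = t - (![t, t, -1 - t]) k := by
  have : eval (![t, t, -1 - t]) (ell k)
      = (∑ j : Fin 3, (![t, t, -1 - t]) j) - (![t, t, -1 - t]) k := by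
    rw [ell, map_sum]
    simp only [eval_X]
    rw [Finset.sum_erase_eq_sub (Finset.mem_univ k)]
  rw [map_add, this, map_one]
  simp [Fin.sum_univ_three]
  ring

lemma gen_vanish (t : ℚ) {p : MvPolynomial (Fin 3) ℚ}
    (hp : ∃ i j : Fin 3, i ≠ j ∧ p = (ell i + 1) * (ell j + 1)) :
    eval (![t, t, -1 - t]) p = 0 := by
  obtain ⟨i, j, hij, rfl⟩ := hp
  rw [map_mul, eval_ell_line, eval_ell_line]
  fin_cases i <;> fin_cases j <;> simp_all

theorem stmt_3 :
    ¬ ∃ b : Polynomial ℚ, b ≠ 0 ∧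
      Polynomial.aeval (X 0 + X 1 + X 2 : MvPolynomial (Fin 3) ℚ) b ∈ J₁ := by
  rintro ⟨b, hb, hmem⟩
  apply hb
  have key : ∀ t : ℚ, Polynomial.eval (t - 1) b = 0 := by
    intro t
    have hker : J₁ ≤ RingHom.ker (eval (![t, t, -1 - t])) := by
      rw [J₁, Ideal.span_le]
      intro p hp
      exact gen_vanish t hp
    have h0 : eval (![t, t, -1 - t])
        (Polynomial.aeval (X 0 + X 1 + X 2 : MvPolynomial (Fin 3) ℚ) b) = 0 :=
      hker hmem
    have : eval (![t, t, -1 - t])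
        (Polynomial.aeval (X 0 + X 1 + X 2 : MvPolynomial (Fin 3) ℚ) b)
        = Polynomial.eval (t - 1) b := by
      rw [Polynomial.aeval_def, Polynomial.eval₂_eq_sum, Polynomial.eval_eq_sum]
      rw [Polynomial.sum, map_sum]
      apply Finset.sum_congr rfl
      intro n _
      rw [map_mul, map_pow]
      simp [algebraMap_eq]
      left; ring
    rw [this] at h0
    exact h0
  apply Polynomial.funext
  intro x
  have := key (x + 1)
  simpa using this
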